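/- arXiv:2402.12209 — 2 statements merged into one kernel-verified Lean document; each statement's English description precedes it below -/
import Mathlib

section
/- Let n ≥ 2 and let Q ∈ SU_n have eigenvalues μ_1, …, μ_n counted with multiplicity, ordered so that arg(μ_1) ≤ ⋯ ≤ arg(μ_n), and suppose ζ := ζ(Q) = (1/(2π))·Σ_{j=1}^n arg(μ_j) = 0. Then Θ(Q) equals the set of all X ∈ su_n with exp(X) = Q whose multiset of eigenvalues is { arg(μ_1)·i, arg(μ_2)·i, …, arg(μ_n)·i }. -/
noncomputable section

open scoped Real Matrix
open Matrix

/-- The special unitary group `SU_n` as a set of matrices: `Q Qᴴ = 1` and `det Q = 1`. -/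
def SpecialUnitary (n : ℕ) : Set (Matrix (Fin n) (Fin n) ℂ) :=
  {Q | Q * Qᴴ = 1 ∧ Q.det = 1}

/-- The Lie algebra `su_n`: skew-hermitian traceless matrices. -/
def suSet (n : ℕ) : Set (Matrix (Fin n) (Fin n) ℂ) :=
  {X | Xᴴ = -X ∧ Matrix.trace X = 0}

/-- The squared Frobenius norm `‖X‖_φ² = trace (X Xᴴ)` (a real number). -/
def frobSq {n : ℕ} (X : Matrix (Fin n) (Fin n) ℂ) : ℝ :=
  (Matrix.trace (X * Xᴴ)).re

/-- `m(Q) = inf { ‖X‖_φ² : X ∈ su_n, exp X = Q }`. -/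
def mQ {n : ℕ} (Q : Matrix (Fin n) (Fin n) ℂ) : ℝ :=
  sInf {r : ℝ | ∃ X ∈ suSet n, NormedSpace.exp X = Q ∧ frobSq X = r}

/-- `Θ(Q)`: the set of minimizing `su_n`-logarithms of `Q`. -/
def ThetaQ {n : ℕ} (Q : Matrix (Fin n) (Fin n) ℂ) : Set (Matrix (Fin n) (Fin n) ℂ) :=
  {X | X ∈ suSet n ∧ NormedSpace.exp X = Q ∧ frobSq X = mQ Q}

/-- `su_n`-plog(Q): generalized principal `su_n`-logarithms of `Q`, i.e. `su_n`-logarithms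
all of whose eigenvalues (roots of the characteristic polynomial) have imaginary part
in `[-π, π]`. -/
def plog {n : ℕ} (Q : Matrix (Fin n) (Fin n) ℂ) : Set (Matrix (Fin n) (Fin n) ℂ) :=
  {X | X ∈ suSet n ∧ NormedSpace.exp X = Q ∧
    ∀ lam ∈ X.charpoly.roots, -π ≤ lam.im ∧ lam.im ≤ π}

/-!
Every `X ∈ su_n` is unitarily diagonalisable, `X = U diag(iθ) Uᴴ`, with `∑ θⱼ = 0` and
`‖X‖_φ² = ∑ θⱼ²`, and `exp X = Q` says that `{e^{iθⱼ}} = {μⱼ}`. Replacing each `θⱼ` by its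
principal value `arg e^{iθⱼ}` keeps `exp X`, keeps the trace zero because `ζ(Q) = 0`, and does
not increase any `|θⱼ|`; hence `m(Q) = ∑ arg(μⱼ)²`. For a minimiser all `θⱼ² = arg(e^{iθⱼ})²`,
so `θⱼ ≤ arg e^{iθⱼ}` (the only way to have equal squares outside `(-π, π]` is `θⱼ = -π`), and
equal sums force `θⱼ = arg e^{iθⱼ}`.
-/

open Complex

lemma arg_exp_mul_I_of_mem_Ioc {θ : ℝ} (hθ : θ ∈ Set.Ioc (-π) π) : arg (exp (θ * I)) = θ := by
  rwa [arg_exp_mul_I, toIocMod_eq_self, show -π + 2 * π = π by ring]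

lemma exp_arg_exp_mul_I (θ : ℝ) : exp (arg (exp (θ * I)) * I) = exp (θ * I) := by
  simpa [norm_exp_ofReal_mul_I] using norm_mul_exp_arg_mul_I (exp (θ * I))

lemma sq_arg_exp_mul_I_le (θ : ℝ) : arg (exp (θ * I)) ^ 2 ≤ θ ^ 2 := by
  by_cases hθ : θ ∈ Set.Ioc (-π) π
  · rw [arg_exp_mul_I_of_mem_Ioc hθ]
  · rw [Set.mem_Ioc, not_and_or, not_lt, not_le] at hθ
    have hπ : π ≤ |θ| := le_abs'.2 (hθ.imp id le_of_lt)
    exact sq_le_sq.2 ((abs_arg_le_pi _).trans hπ)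

lemma le_arg_exp_mul_I_of_sq_le {θ : ℝ} (h : θ ^ 2 ≤ arg (exp (θ * I)) ^ 2) :
    θ ≤ arg (exp (θ * I)) := by
  by_cases hθ : θ ∈ Set.Ioc (-π) π
  · rw [arg_exp_mul_I_of_mem_Ioc hθ]
  rw [Set.mem_Ioc, not_and_or, not_lt, not_le] at hθ
  rcases hθ with hθ | hθ
  · linarith [neg_pi_lt_arg (exp (θ * I))]
  · have := sq_le_sq.1 h
    linarith [abs_arg_le_pi (exp (θ * I)), le_abs_self θ]

lemma eq_arg_exp_mul_I_of_sum_sq_le {ι : Type*} [Fintype ι] {θ : ι → ℝ}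
    (hsq : ∑ j, θ j ^ 2 ≤ ∑ j, arg (exp (θ j * I)) ^ 2)
    (hsum : ∑ j, arg (exp (θ j * I)) = ∑ j, θ j) (j : ι) :
    θ j = arg (exp (θ j * I)) := by
  have hsq_eq : ∀ j ∈ Finset.univ, arg (exp (θ j * I)) ^ 2 = θ j ^ 2 :=
    (Finset.sum_eq_sum_iff_of_le fun j _ => sq_arg_exp_mul_I_le (θ j)).1
      (le_antisymm (Finset.sum_le_sum fun j _ => sq_arg_exp_mul_I_le (θ j)) hsq)
  have hle : ∀ j ∈ Finset.univ, θ j ≤ arg (exp (θ j * I)) :=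
    fun j hj => le_arg_exp_mul_I_of_sq_le (hsq_eq j hj).ge
  exact (Finset.sum_eq_sum_iff_of_le hle).1 hsum.symm j (Finset.mem_univ j)

lemma Fintype.sum_comp_eq_of_map_eq {ι α β : Type*} [Fintype ι] [AddCommMonoid β]
    {f g : ι → α} (h : Finset.univ.val.map f = Finset.univ.val.map g) (φ : α → β) :
    ∑ j, φ (f j) = ∑ j, φ (g j) := by
  simpa [← Finset.sum_map_val, Multiset.map_map, Function.comp_def] using
    congrArg (fun s => (s.map φ).sum) h

section SkewDiag

variable {n : ℕ}

def skewDiag (U : Matrix (Fin n) (Fin n) ℂ) (θ : Fin n → ℝ) : Matrix (Fin n) (Fin n) ℂ :=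
  U * diagonal (fun j => (θ j : ℂ) * I) * star U

lemma exists_skewDiag_eq {X : Matrix (Fin n) (Fin n) ℂ} (hX : Xᴴ = -X) :
    ∃ U ∈ unitaryGroup (Fin n) ℂ, ∃ θ, X = skewDiag U θ := by
  have hA : (I • X).IsHermitian := by
    simp [Matrix.IsHermitian, Matrix.conjTranspose_smul, hX]
  refine ⟨hA.eigenvectorUnitary, hA.eigenvectorUnitary.2, fun j => -hA.eigenvalues j, ?_⟩
  have hXA : X = (-I) • (I • X) := by rw [smul_smul]; simp
  conv_lhs => rw [hXA, hA.spectral_theorem, Unitary.conjStarAlgAut_apply]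
  rw [← smul_mul_assoc, ← mul_smul_comm, ← diagonal_smul, skewDiag]
  congr 3
  funext j
  simp only [Pi.smul_apply, Function.comp_apply, smul_eq_mul, ofReal_neg, coe_algebraMap]
  ring

open Polynomial in
lemma roots_charpoly_diagonal (d : Fin n → ℂ) :
    (diagonal d).charpoly.roots = Finset.univ.val.map d := by
  rw [charpoly_diagonal,
    roots_prod _ _ (Finset.prod_ne_zero_iff.2 fun i _ => X_sub_C_ne_zero (d i))]
  simp

lemma conjTranspose_skewDiag (U : Matrix (Fin n) (Fin n) ℂ) (θ : Fin n → ℝ) :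
    (skewDiag U θ)ᴴ = -skewDiag U θ := by
  have hD : (diagonal fun j => (θ j : ℂ) * I)ᴴ = -diagonal fun j => (θ j : ℂ) * I := by
    rw [diagonal_conjTranspose, diagonal_neg]
    congr 1
    funext j
    simp
  rw [skewDiag, conjTranspose_mul, conjTranspose_mul, hD, ← star_eq_conjTranspose, star_star,
    star_eq_conjTranspose]
  noncomm_ring

variable {U : Matrix (Fin n) (Fin n) ℂ}

lemma charpoly_unitary_conj (hU : U ∈ unitaryGroup (Fin n) ℂ) (D : Matrix (Fin n) (Fin n) ℂ) :
    (U * D * star U).charpoly = D.charpoly := by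
  rw [charpoly_mul_comm, ← mul_assoc, Unitary.star_mul_self_of_mem hU, one_mul]

lemma frobSq_unitary_conj (hU : U ∈ unitaryGroup (Fin n) ℂ) (D : Matrix (Fin n) (Fin n) ℂ) :
    frobSq (U * D * star U) = frobSq D := by
  have hUU : Uᴴ * U = 1 := Unitary.star_mul_self_of_mem hU
  have h : U * D * Uᴴ * (U * D * Uᴴ)ᴴ = U * (D * Dᴴ) * Uᴴ := by
    calc _ = U * D * (Uᴴ * U) * Dᴴ * Uᴴ := by
          simp only [conjTranspose_mul, conjTranspose_conjTranspose, mul_assoc]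
      _ = _ := by rw [hUU, mul_one, mul_assoc _ D]
  rw [frobSq, frobSq, star_eq_conjTranspose, h, trace_mul_cycle, hUU, one_mul]

lemma roots_charpoly_skewDiag (hU : U ∈ unitaryGroup (Fin n) ℂ) (θ : Fin n → ℝ) :
    (skewDiag U θ).charpoly.roots = Finset.univ.val.map fun j => (θ j : ℂ) * I := by
  rw [skewDiag, charpoly_unitary_conj hU, roots_charpoly_diagonal]

lemma exp_skewDiag (hU : U ∈ unitaryGroup (Fin n) ℂ) (θ : Fin n → ℝ) :
    NormedSpace.exp (skewDiag U θ) = U * diagonal (fun j => exp ((θ j : ℂ) * I)) * star U := by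
  have hUU : U * star U = 1 := Unitary.mul_star_self_of_mem hU
  rw [skewDiag, ← Matrix.inv_eq_right_inv hUU, Matrix.exp_conj _ _ (.of_mul_eq_one _ hUU),
    Matrix.exp_diagonal, Pi.exp_def, exp_eq_exp_ℂ]

lemma roots_charpoly_exp_skewDiag (hU : U ∈ unitaryGroup (Fin n) ℂ) (θ : Fin n → ℝ) :
    (NormedSpace.exp (skewDiag U θ)).charpoly.roots =
      Finset.univ.val.map fun j => exp ((θ j : ℂ) * I) := by
  rw [exp_skewDiag hU, charpoly_unitary_conj hU, roots_charpoly_diagonal]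

lemma trace_skewDiag (hU : U ∈ unitaryGroup (Fin n) ℂ) (θ : Fin n → ℝ) :
    trace (skewDiag U θ) = (∑ j, θ j : ℝ) * I := by
  rw [skewDiag, trace_mul_cycle, Unitary.star_mul_self_of_mem hU, one_mul, trace_diagonal]
  push_cast
  rw [Finset.sum_mul]

lemma skewDiag_mem_suSet_iff (hU : U ∈ unitaryGroup (Fin n) ℂ) (θ : Fin n → ℝ) :
    skewDiag U θ ∈ suSet n ↔ ∑ j, θ j = 0 := by
  simp only [suSet, Set.mem_ofPred_eq, conjTranspose_skewDiag, trace_skewDiag hU, true_and,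
    mul_eq_zero, I_ne_zero, or_false, ofReal_eq_zero]

lemma frobSq_skewDiag (hU : U ∈ unitaryGroup (Fin n) ℂ) (θ : Fin n → ℝ) :
    frobSq (skewDiag U θ) = ∑ j, θ j ^ 2 := by
  rw [skewDiag, frobSq_unitary_conj hU, frobSq, diagonal_conjTranspose, diagonal_mul_diagonal,
    trace_diagonal, re_sum]
  simp [sq]

end SkewDiag

section Logarithms

variable {n : ℕ} {Q X : Matrix (Fin n) (Fin n) ℂ} {μ : Fin n → ℂ}

lemma frobSq_eq_of_roots_charpoly {θ : Fin n → ℝ} (hX : Xᴴ = -X)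
    (hroots : X.charpoly.roots = Finset.univ.val.map fun j => (θ j : ℂ) * I) :
    frobSq X = ∑ j, θ j ^ 2 := by
  obtain ⟨U, hU, φ, rfl⟩ := exists_skewDiag_eq hX
  rw [roots_charpoly_skewDiag hU] at hroots
  rw [frobSq_skewDiag hU]
  simpa using Fintype.sum_comp_eq_of_map_eq hroots fun z => z.im ^ 2

lemma map_arg_exp_eq_map_arg (hμ : Q.charpoly.roots = Finset.univ.val.map μ)
    {U : Matrix (Fin n) (Fin n) ℂ} (hU : U ∈ unitaryGroup (Fin n) ℂ) {θ : Fin n → ℝ}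
    (hexp : NormedSpace.exp (skewDiag U θ) = Q) :
    Finset.univ.val.map (fun j => arg (exp ((θ j : ℂ) * I))) =
      Finset.univ.val.map fun j => arg (μ j) := by
  have h : Finset.univ.val.map (fun j => exp ((θ j : ℂ) * I)) = Finset.univ.val.map μ := by
    rw [← hμ, ← hexp, roots_charpoly_exp_skewDiag hU]
  simpa [Multiset.map_map, Function.comp_def] using congrArg (Multiset.map arg) h

lemma sum_sq_arg_le_frobSq (hμ : Q.charpoly.roots = Finset.univ.val.map μ) (hX : Xᴴ = -X)
    (hexp : NormedSpace.exp X = Q) :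
    ∑ j, arg (μ j) ^ 2 ≤ frobSq X := by
  obtain ⟨U, hU, θ, rfl⟩ := exists_skewDiag_eq hX
  rw [frobSq_skewDiag hU,
    ← Fintype.sum_comp_eq_of_map_eq (map_arg_exp_eq_map_arg hμ hU hexp) (· ^ 2)]
  exact Finset.sum_le_sum fun j _ => sq_arg_exp_mul_I_le (θ j)

lemma exists_frobSq_eq_sum_sq_arg (hμ : Q.charpoly.roots = Finset.univ.val.map μ)
    (hζ : ∑ j, arg (μ j) = 0) (hX : X ∈ suSet n) (hexp : NormedSpace.exp X = Q) :
    ∃ Y ∈ suSet n, NormedSpace.exp Y = Q ∧ frobSq Y = ∑ j, arg (μ j) ^ 2 := by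
  obtain ⟨U, hU, θ, rfl⟩ := exists_skewDiag_eq hX.1
  have hmap := map_arg_exp_eq_map_arg hμ hU hexp
  refine ⟨skewDiag U fun j => arg (exp ((θ j : ℂ) * I)), ?_, ?_, ?_⟩
  · rwa [skewDiag_mem_suSet_iff hU, Fintype.sum_comp_eq_of_map_eq hmap fun t => t]
  · simp only [← hexp, exp_skewDiag hU, exp_arg_exp_mul_I]
  · rw [frobSq_skewDiag hU, Fintype.sum_comp_eq_of_map_eq hmap (· ^ 2)]

lemma mQ_eq_sum_sq_arg (hμ : Q.charpoly.roots = Finset.univ.val.map μ)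
    (hζ : ∑ j, arg (μ j) = 0) (hX : X ∈ suSet n) (hexp : NormedSpace.exp X = Q) :
    mQ Q = ∑ j, arg (μ j) ^ 2 := by
  obtain ⟨Y, hY, hYexp, hYfrob⟩ := exists_frobSq_eq_sum_sq_arg hμ hζ hX hexp
  refine IsLeast.csInf_eq ⟨⟨Y, hY, hYexp, hYfrob⟩, ?_⟩
  rintro _ ⟨Z, hZ, hZexp, rfl⟩
  exact sum_sq_arg_le_frobSq hμ hZ.1 hZexp

lemma roots_charpoly_eq_of_frobSq_le (hμ : Q.charpoly.roots = Finset.univ.val.map μ)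
    (hζ : ∑ j, arg (μ j) = 0) (hX : X ∈ suSet n) (hexp : NormedSpace.exp X = Q)
    (hle : frobSq X ≤ ∑ j, arg (μ j) ^ 2) :
    X.charpoly.roots = Finset.univ.val.map fun j => (arg (μ j) : ℂ) * I := by
  obtain ⟨U, hU, θ, rfl⟩ := exists_skewDiag_eq hX.1
  have hmap := map_arg_exp_eq_map_arg hμ hU hexp
  have hθ : ∀ j, θ j = arg (exp ((θ j : ℂ) * I)) := by
    refine eq_arg_exp_mul_I_of_sum_sq_le ?_ ?_
    · rwa [← frobSq_skewDiag hU, Fintype.sum_comp_eq_of_map_eq hmap (· ^ 2)]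
    · rw [Fintype.sum_comp_eq_of_map_eq hmap fun t => t, (skewDiag_mem_suSet_iff hU θ).1 hX]
      exact hζ
  have h := congrArg (Multiset.map fun t : ℝ => (t : ℂ) * I) hmap
  simp only [Multiset.map_map, Function.comp_def, ← hθ] at h
  rwa [roots_charpoly_skewDiag hU]

end Logarithms

theorem stmt_10_general (n : ℕ) (Q : Matrix (Fin n) (Fin n) ℂ) (μ : Fin n → ℂ)
    (hμ : Q.charpoly.roots = Multiset.map μ Finset.univ.val)
    (hζ : (∑ j, (μ j).arg) = 0) :
    ThetaQ Q = {X | X ∈ suSet n ∧ NormedSpace.exp X = Q ∧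
      X.charpoly.roots =
        Multiset.map (fun j => (((μ j).arg : ℝ) : ℂ) * Complex.I) Finset.univ.val} := by
  ext X
  constructor
  · rintro ⟨hX, hexp, hmin⟩
    exact ⟨hX, hexp, roots_charpoly_eq_of_frobSq_le hμ hζ hX hexp
      (hmin.trans_le (mQ_eq_sum_sq_arg hμ hζ hX hexp).le)⟩
  · rintro ⟨hX, hexp, hroots⟩
    refine ⟨hX, hexp, ?_⟩
    rw [mQ_eq_sum_sq_arg hμ hζ hX hexp, frobSq_eq_of_roots_charpoly hX.1 hroots]

/-- if `ζ(Q) = 0`, then `Θ(Q)` is the set of `su_n`-logarithms of `Q`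
whose multiset of eigenvalues is `{arg(μ_1)·i, …, arg(μ_n)·i}`. -/
theorem stmt_10 (n : ℕ) (hn : 2 ≤ n) (Q : Matrix (Fin n) (Fin n) ℂ)
    (hQ : Q ∈ SpecialUnitary n) (μ : Fin n → ℂ)
    (hμ : Q.charpoly.roots = Multiset.map μ Finset.univ.val)
    (hmono : Monotone fun j => (μ j).arg)
    (hζ : (∑ j, (μ j).arg) = 0) :
    ThetaQ Q = {X | X ∈ suSet n ∧ NormedSpace.exp X = Q ∧
      X.charpoly.roots =
        Multiset.map (fun j => (((μ j).arg : ℝ) : ℂ) * Complex.I) Finset.univ.val} :=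
  stmt_10_general n Q μ hμ hζ
end
end

section
/- Let n ≥ 2 and set δ_n := max{ m(Q) : Q ∈ SU_n }. Then δ_n = n·π² if n is even, and δ_n = (n − 1/n)·π² if n is odd; that is, δ_n is an upper bound for m on SU_n and is attained by some Q ∈ SU_n. -/
/-!
Every `Q ∈ SU_n` is `U · diag(e^{iθ_j}) · Uᴴ` with `U` unitary, and then `X = U · diag(iθ_j) · Uᴴ`
is an `su_n`-logarithm of `Q` with `‖X‖_φ² = ∑ θ_j²` as soon as `∑ θ_j = 0`. Take `θ_j / 2π` to be
the fractional part `f_j ∈ [0, 1)` of `arg/2π`, so `∑ f_j = m ∈ ℕ` because `det Q = 1`, and lower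
by one the `m` largest `f_j`. The resulting `g_j` sum to zero and differ by at most one across
the two groups, which forces `∑ g_j² ≤ m(n - m)/n`; hence `m(Q) ≤ 4π² ⌊n/2⌋⌈n/2⌉/n = δ_n`.

Conversely, with `α = 2π⌊n/2⌋/n`, every `su_n`-logarithm of `e^{-iα} · 1` has eigenvalues `iθ_j`
with `θ_j ≡ -α (mod 2π)`, so `(θ_j + α - π)² ≥ π²`; summing and using `∑ θ_j = 0` gives
`‖X‖_φ² ≥ n α (2π - α) = δ_n`, with equality when every `θ_j ∈ {-α, 2π - α}`.
-/

noncomputable section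

open scoped Real Matrix
open Matrix

open Complex Finset Unitary

lemma star_diagonal_ofReal_mul_I {ι : Type*} [DecidableEq ι] (θ : ι → ℝ) :
    star (diagonal fun j => (θ j : ℂ) * I) = -diagonal fun j => (θ j : ℂ) * I := by
  ext i j
  rcases eq_or_ne i j with rfl | h
  · simp
  · simp [diagonal_apply_ne _ h, diagonal_apply_ne' _ h]

section Conjugation

variable {ι : Type*} [Fintype ι] [DecidableEq ι] (U : unitaryGroup ι ℂ)

lemma trace_conjStarAlgAut (A : Matrix ι ι ℂ) : trace (conjStarAlgAut ℂ _ U A) = trace A := by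
  rw [conjStarAlgAut_apply, trace_mul_cycle, coe_star_mul_self, one_mul]

lemma det_conjStarAlgAut (A : Matrix ι ι ℂ) : det (conjStarAlgAut ℂ _ U A) = det A := by
  rw [conjStarAlgAut_apply, det_mul, det_mul, mul_comm, ← mul_assoc, ← det_mul, coe_star_mul_self,
    det_one, one_mul]

lemma exp_conjStarAlgAut (A : Matrix ι ι ℂ) :
    NormedSpace.exp (conjStarAlgAut ℂ _ U A) = conjStarAlgAut ℂ _ U (NormedSpace.exp A) := by
  have hinv : (U : Matrix ι ι ℂ)⁻¹ = star (U : Matrix ι ι ℂ) :=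
    inv_eq_right_inv (coe_mul_star_self U)
  rw [conjStarAlgAut_apply, conjStarAlgAut_apply, ← hinv,
    Matrix.exp_conj _ _ (IsUnit.of_mul_eq_one _ (coe_mul_star_self U))]

end Conjugation

section Diagonalization

variable {ι : Type*} [Fintype ι] [DecidableEq ι]

lemma exp_diagonal_ofReal_mul_I (θ : ι → ℝ) :
    NormedSpace.exp (diagonal fun j => (θ j : ℂ) * I) = diagonal fun j => exp ((θ j : ℂ) * I) := by
  rw [exp_diagonal]
  congr 1
  ext j
  rw [Pi.coe_exp, ← Complex.exp_eq_exp_ℂ]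

lemma exists_eq_conjStarAlgAut_diagonal_of_star_eq_neg {X : Matrix ι ι ℂ} (hX : star X = -X) :
    ∃ (U : unitaryGroup ι ℂ) (θ : ι → ℝ),
      X = conjStarAlgAut ℂ _ U (diagonal fun j => (θ j : ℂ) * I) := by
  have hH : (-I • X).IsHermitian := by
    rw [IsHermitian, ← star_eq_conjTranspose, star_smul, hX]
    simp
  obtain ⟨U, μ, hU⟩ : ∃ (U : unitaryGroup ι ℂ) (μ : ι → ℝ),
      -I • X = conjStarAlgAut ℂ _ U (diagonal fun j => (μ j : ℂ)) :=
    ⟨_, _, hH.spectral_theorem⟩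
  refine ⟨U, μ, ?_⟩
  calc X = I • (-I • X) := by rw [smul_smul]; simp
    _ = _ := by
      rw [hU, ← map_smul, smul_eq_diagonal_mul, diagonal_mul_diagonal]
      simp_rw [mul_comm I]

lemma exists_norm_eq_one_notMem_spectrum (Q : Matrix ι ι ℂ) :
    ∃ w : ℂ, ‖w‖ = 1 ∧ w ∉ spectrum ℂ Q := by
  have hinf : (Metric.sphere (0 : ℂ) 1).Infinite :=
    (isPreconnected_sphere (by simp) 0 1).infinite_of_nontrivial
      ⟨1, by simp, -1, by simp, by norm_num⟩
  obtain ⟨w, hw, hwQ⟩ := (hinf.sdiff Q.finite_spectrum).nonempty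
  exact ⟨w, by simpa using hw, hwQ⟩

lemma eq_diagonal_of_diagonal_mul_eq_smul_one {a : ι → ℂ} (ha : ∀ i, a i ≠ 0)
    {B : Matrix ι ι ℂ} {c : ℂ} (h : diagonal a * B = c • 1) :
    B = diagonal fun i => c / a i := by
  ext i j
  have hij := congrFun (congrFun h i) j
  rw [diagonal_mul] at hij
  rcases eq_or_ne i j with rfl | hne
  · simp only [Matrix.smul_apply, one_apply_eq, smul_eq_mul, mul_one] at hij
    rw [diagonal_apply_eq, ← hij, mul_div_cancel_left₀ _ (ha i)]
  · simp only [Matrix.smul_apply, one_apply_ne hne, smul_eq_mul, mul_zero, mul_eq_zero] at hij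
    rw [diagonal_apply_ne _ hne, hij.resolve_left (ha i)]

lemma isHermitian_cayley {Q : Matrix ι ι ℂ} (hQ : Q ∈ unitaryGroup ι ℂ) {w : ℂ} (hw : ‖w‖ = 1)
    (hM : IsUnit (w • 1 - Q)) : (I • (w • 1 + Q) * (w • 1 - Q)⁻¹).IsHermitian := by
  set M : Matrix ι ι ℂ := w • 1 - Q
  set N : Matrix ι ι ℂ := I • (w • 1 + Q)
  have hQQ : star Q * Q = 1 := star_mul_self_of_mem hQ
  have hww : starRingEnd ℂ w * w = 1 := by
    rw [← Complex.normSq_eq_conj_mul_self, Complex.normSq_eq_norm_sq, hw]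
    norm_num
  have key : star N * M = star M * N := by
    simp only [N, M, star_smul, star_add, star_sub, star_one, smul_mul_assoc, mul_smul_comm,
      add_mul, mul_add, sub_mul, mul_sub, one_mul, mul_one, hQQ, smul_smul, Complex.star_def,
      conj_I]
    match_scalars <;> grind
  have hMd : IsUnit M.det := (isUnit_iff_isUnit_det M).1 hM
  refine hM.star.mul_left_cancel (hM.mul_right_cancel ?_)
  rw [← star_eq_conjTranspose, star_mul, ← mul_assoc, ← star_mul, nonsing_inv_mul _ hMd, star_one,
    one_mul, mul_assoc, nonsing_inv_mul_cancel_right _ _ hMd, key]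

/-- Cayley transform: for `w` on the unit circle outside the spectrum of `Q`, the Hermitian
`H = i (w + Q) (w - Q)⁻¹` satisfies `(H + i) (w - Q) = 2 i w`, so a unitary basis diagonalising
`H` also diagonalises `Q`. -/
lemma exists_eq_conjStarAlgAut_diagonal_of_mem_unitaryGroup {Q : Matrix ι ι ℂ}
    (hQ : Q ∈ unitaryGroup ι ℂ) :
    ∃ (U : unitaryGroup ι ℂ) (d : ι → ℂ), Q = conjStarAlgAut ℂ _ U (diagonal d) := by
  obtain ⟨w, hw, hwQ⟩ := exists_norm_eq_one_notMem_spectrum Q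
  have hM : IsUnit (w • 1 - Q) := by
    simpa [Algebra.algebraMap_eq_smul_one] using spectrum.notMem_iff.1 hwQ
  have hH := isHermitian_cayley hQ hw hM
  have hcayley : (I • (w • 1 + Q) * (w • 1 - Q)⁻¹ + I • 1) * (w • 1 - Q) = (2 * I * w) • 1 := by
    rw [add_mul, nonsing_inv_mul_cancel_right _ _ ((isUnit_iff_isUnit_det _).1 hM)]
    simp only [smul_mul_assoc, one_mul]
    module
  generalize I • (w • 1 + Q) * (w • 1 - Q)⁻¹ = H at hH hcayley
  obtain ⟨U, μ, rfl⟩ : ∃ (U : unitaryGroup ι ℂ) (μ : ι → ℝ),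
      H = conjStarAlgAut ℂ _ U (diagonal fun j => (μ j : ℂ)) :=
    ⟨_, _, hH.spectral_theorem⟩
  set σ := conjStarAlgAut ℂ (Matrix ι ι ℂ) U
  have hdiag : diagonal (fun j => (μ j : ℂ) + I) * σ.symm (w • 1 - Q) = (2 * I * w) • 1 := by
    have := congrArg σ.symm hcayley
    rwa [map_mul, map_add, StarAlgEquiv.symm_apply_apply, map_smul, map_one, map_smul, map_one,
      smul_one_eq_diagonal, diagonal_add] at this
  have hne : ∀ j, (μ j : ℂ) + I ≠ 0 := fun j h => by simpa using congrArg Complex.im h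
  have h := eq_diagonal_of_diagonal_mul_eq_smul_one hne hdiag
  rw [map_sub, map_smul, map_one, sub_eq_iff_eq_add', ← sub_eq_iff_eq_add, smul_one_eq_diagonal,
    diagonal_sub] at h
  exact ⟨U, _, (σ.symm_apply_eq ..).1 h.symm⟩

lemma norm_eq_one_of_diagonal_mem_unitaryGroup {d : ι → ℂ} (hd : diagonal d ∈ unitaryGroup ι ℂ)
    (j : ι) : ‖d j‖ = 1 := by
  have hj := congrFun (congrFun (mem_unitaryGroup_iff.1 hd) j) j
  rw [star_eq_conjTranspose, diagonal_conjTranspose, diagonal_mul_diagonal, diagonal_apply_eq,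
    one_apply_eq, Pi.star_apply, Complex.star_def, mul_conj, ← ofReal_one, ofReal_inj,
    normSq_eq_norm_sq] at hj
  exact (pow_eq_one_iff_of_nonneg (norm_nonneg _) two_ne_zero).1 hj

lemma exists_eq_conjStarAlgAut_diagonal_norm_eq_one {Q : Matrix ι ι ℂ}
    (hQ : Q ∈ unitaryGroup ι ℂ) : ∃ (U : unitaryGroup ι ℂ) (d : ι → ℂ),
      (∀ j, ‖d j‖ = 1) ∧ Q = conjStarAlgAut ℂ _ U (diagonal d) := by
  obtain ⟨U, d, rfl⟩ := exists_eq_conjStarAlgAut_diagonal_of_mem_unitaryGroup hQ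
  refine ⟨U, d, norm_eq_one_of_diagonal_mem_unitaryGroup ?_, rfl⟩
  have := mul_mem (mul_mem (star_mem U.2) hQ) U.2
  rwa [conjStarAlgAut_apply, ← mul_assoc, ← mul_assoc, coe_star_mul_self, one_mul, mul_assoc,
    coe_star_mul_self, mul_one] at this

end Diagonalization

lemma mul_sub_le_half_mul (m n : ℕ) : m * (n - m) ≤ n / 2 * (n - n / 2) := by
  rcases le_total m n with hmn | hnm
  · obtain ⟨k, rfl | rfl⟩ := Nat.even_or_odd' n
    · rw [show 2 * k / 2 = k by omega, show 2 * k - k = k by omega]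
      zify [hmn]
      nlinarith [sq_nonneg ((m : ℤ) - k)]
    · rw [show (2 * k + 1) / 2 = k by omega, show 2 * k + 1 - k = k + 1 by omega]
      zify [hmn]
      nlinarith [sq_nonneg ((m : ℤ) - k), sq_nonneg ((m : ℤ) - k - 1)]
  · simp [Nat.sub_eq_zero_of_le hnm]

/-- The paper's `δ_n`: the maximum over `m ≤ n` of `4π² m (n - m) / n`. -/
def deltaSU (n : ℕ) : ℝ := 4 * π ^ 2 * ((n / 2 * (n - n / 2) : ℕ) : ℝ) / n

/-- The largest multiple of `2π / n` that is at most `π`; as `n α ∈ 2πℤ`,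
`exp (-α i) • 1 ∈ SU_n`. -/
def extremalAngle (n : ℕ) : ℝ := 2 * π * (n / 2 : ℕ) / n

lemma natCast_mul_extremalAngle (n : ℕ) : n * extremalAngle n = 2 * π * (n / 2 : ℕ) := by
  rcases Nat.eq_zero_or_pos n with rfl | hn
  · simp
  unfold extremalAngle
  field_simp

lemma deltaSU_eq_mul_extremalAngle (n : ℕ) :
    deltaSU n = n * (extremalAngle n * (2 * π - extremalAngle n)) := by
  rcases Nat.eq_zero_or_pos n with rfl | hn
  · simp [deltaSU]
  unfold deltaSU extremalAngle
  rw [Nat.cast_mul, Nat.cast_sub (Nat.div_le_self n 2)]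
  field_simp
  ring

lemma deltaSU_eq_ite (n : ℕ) :
    deltaSU n = if Even n then (n : ℝ) * π ^ 2 else ((n : ℝ) - 1 / (n : ℝ)) * π ^ 2 := by
  obtain ⟨k, rfl | rfl⟩ := Nat.even_or_odd' n
  · rw [if_pos (even_two_mul k), deltaSU, show 2 * k / 2 = k by omega,
      show 2 * k - k = k by omega]
    rcases Nat.eq_zero_or_pos k with rfl | hk
    · simp
    push_cast
    field_simp
    ring
  · rw [if_neg (Nat.not_even_two_mul_add_one k), deltaSU, show (2 * k + 1) / 2 = k by omega,
      show 2 * k + 1 - k = k + 1 by omega]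
    push_cast
    field_simp
    ring

section Angles

variable {ι : Type*} [Fintype ι]

lemma exists_card_eq_forall_le {β : Type*} [AddCommGroup β] [LinearOrder β]
    [IsOrderedAddMonoid β] (f : ι → β) {m : ℕ} (hm : m ≤ Fintype.card ι) :
    ∃ A : Finset ι, #A = m ∧ ∀ i ∈ A, ∀ j ∉ A, f j ≤ f i := by
  classical
  obtain ⟨A, hA, hmax⟩ := (powersetCard m univ).exists_max_image (fun s => ∑ i ∈ s, f i)
    (powersetCard_nonempty.2 (by simpa using hm))
  rw [mem_powersetCard] at hA
  refine ⟨A, hA.2, fun i hi j hj => le_of_not_gt fun hlt => ?_⟩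
  have hswap : insert j (A.erase i) ∈ powersetCard m univ := by
    rw [mem_powersetCard, card_insert_of_notMem (fun h => hj (mem_of_mem_erase h)),
      card_erase_add_one hi]
    exact ⟨subset_univ _, hA.2⟩
  have := hmax _ hswap
  rw [sum_insert (fun h => hj (mem_of_mem_erase h)), ← add_sum_erase A f hi] at this
  exact hlt.not_ge (le_of_add_le_add_right this)

lemma sum_sq_le_card_mul_card_compl_div [DecidableEq ι] {g : ι → ℝ} (A : Finset ι)
    (hsum : ∑ i, g i = 0) (hA : ∀ i ∈ A, g i ≤ 0) (hAc : ∀ j ∉ A, 0 ≤ g j)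
    (hgap : ∀ i ∈ A, ∀ j ∉ A, g j - g i ≤ 1) :
    ∑ i, g i ^ 2 ≤ #A * #Aᶜ / Fintype.card ι := by
  rcases A.eq_empty_or_nonempty with rfl | hAne
  · have hg := (sum_eq_zero_iff_of_nonneg fun j _ => hAc j (notMem_empty j)).1 hsum
    simp [hg]
  rcases Aᶜ.eq_empty_or_nonempty with hAc' | hAcne
  · rw [compl_eq_empty_iff] at hAc'
    subst hAc'
    have hg := (sum_eq_zero_iff_of_nonpos fun i _ => hA i (mem_univ i)).1 hsum
    simp [hg]
  -- Sum `-g i (g j - g i) ≤ -g i` and `g j (g j - g i) ≤ g j` over the pairs `i ∈ A`, `j ∉ A`.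
  set P := ∑ j ∈ Aᶜ, g j with hP
  have hPA : ∑ i ∈ A, g i = -P := by rw [eq_neg_iff_add_eq_zero, sum_add_sum_compl, hsum]
  have h1 : ∑ i ∈ A, ∑ j ∈ Aᶜ, -g i * (g j - g i) ≤ ∑ i ∈ A, ∑ j ∈ Aᶜ, -g i :=
    sum_le_sum fun i hi => sum_le_sum fun j hj =>
      mul_le_of_le_one_right (neg_nonneg.2 (hA i hi)) (hgap i hi j (mem_compl.1 hj))
  have h2 : ∑ j ∈ Aᶜ, ∑ i ∈ A, g j * (g j - g i) ≤ ∑ j ∈ Aᶜ, ∑ i ∈ A, g j :=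
    sum_le_sum fun j hj => sum_le_sum fun i hi =>
      mul_le_of_le_one_right (hAc j (mem_compl.1 hj)) (hgap i hi j (mem_compl.1 hj))
  simp only [mul_sub, sum_sub_distrib, ← mul_sum, sum_const, nsmul_eq_mul, ← sum_mul, neg_mul,
    sum_neg_distrib, hPA, ← hP, ← sq] at h1 h2
  have ha : (0 : ℝ) < #A := by exact_mod_cast hAne.card_pos
  have hb : (0 : ℝ) < #Aᶜ := by exact_mod_cast hAcne.card_pos
  have hn : (Fintype.card ι : ℝ) = #A + #Aᶜ := by exact_mod_cast (card_add_card_compl A).symm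
  rw [← sum_add_sum_compl A, hn, le_div_iff₀ (by positivity)]
  have hcomb : (#A * #Aᶜ : ℝ) * (∑ i ∈ A, g i ^ 2 + ∑ i ∈ Aᶜ, g i ^ 2)
      ≤ 2 * #A * #Aᶜ * P - (#A + #Aᶜ) * P ^ 2 := by
    nlinarith
  nlinarith [mul_pos ha hb, sq_nonneg ((#A + #Aᶜ : ℝ) * P - #A * #Aᶜ)]

lemma exists_int_sub_sum_eq_zero_sum_sq_le [DecidableEq ι] {f : ι → ℝ} (h0 : ∀ j, 0 ≤ f j)
    (h1 : ∀ j, f j < 1) {m : ℕ} (hm : ∑ j, f j = m) :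
    ∃ g : ι → ℝ, (∀ j, ∃ k : ℤ, g j = f j - k) ∧ ∑ j, g j = 0 ∧
      ∑ j, g j ^ 2 ≤ ((m * (Fintype.card ι - m) : ℕ) : ℝ) / Fintype.card ι := by
  have hmn : m ≤ Fintype.card ι := by
    have : (m : ℝ) ≤ Fintype.card ι := by
      rw [← hm]
      simpa using sum_le_sum fun j (_ : j ∈ univ) => (h1 j).le
    exact_mod_cast this
  obtain ⟨A, hA, hAmax⟩ := exists_card_eq_forall_le f hmn
  set g : ι → ℝ := fun j => f j - if j ∈ A then 1 else 0
  have hg : ∑ j, g j = 0 := by simp [g, sum_sub_distrib, hm, hA]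
  refine ⟨g, fun j => ⟨if j ∈ A then 1 else 0, by simp [g]⟩, hg, ?_⟩
  rw [← hA, ← card_compl, Nat.cast_mul]
  exact sum_sq_le_card_mul_card_compl_div A hg (fun i hi => by simp [g, hi, (h1 i).le])
    (fun j hj => by simp [g, hj, h0 j]) (fun i hi j hj => by simp [g, hi, hj, hAmax i hi j hj])

lemma exp_two_pi_mul_fract_arg_mul_I {z : ℂ} (hz : ‖z‖ = 1) :
    exp ((2 * π * Int.fract (z.arg / (2 * π)) : ℝ) * I) = z := by
  have : (2 * π * Int.fract (z.arg / (2 * π)) : ℝ) = z.arg - ⌊z.arg / (2 * π)⌋ * (2 * π) := by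
    rw [← Int.self_sub_floor]
    field_simp
  rw [this]
  push_cast
  rw [exp_mul_I_periodic.sub_int_mul_eq]
  simpa [hz] using norm_mul_exp_arg_mul_I z

lemma exists_int_of_exp_ofReal_mul_I_eq {x y : ℝ} (h : exp (x * I) = exp (y * I)) :
    ∃ k : ℤ, x = y + 2 * π * k := by
  obtain ⟨k, hk⟩ := exp_eq_exp_iff_exists_int.1 h
  have him := congrArg Complex.im hk
  simp at him
  exact ⟨k, by linarith⟩

lemma exists_angles_sum_eq_zero_sum_sq_le_deltaSU [DecidableEq ι] {d : ι → ℂ}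
    (hd : ∀ j, ‖d j‖ = 1) (hprod : ∏ j, d j = 1) :
    ∃ θ : ι → ℝ, (∀ j, exp ((θ j : ℂ) * I) = d j) ∧ ∑ j, θ j = 0 ∧
      ∑ j, θ j ^ 2 ≤ deltaSU (Fintype.card ι) := by
  set f : ι → ℝ := fun j => Int.fract ((d j).arg / (2 * π))
  have hf : ∀ j, exp ((2 * π * f j : ℝ) * I) = d j := fun j => exp_two_pi_mul_fract_arg_mul_I (hd j)
  obtain ⟨m, hm⟩ : ∃ m : ℕ, ∑ j, f j = m := by
    obtain ⟨k, hk⟩ := exists_int_of_exp_ofReal_mul_I_eq (x := 2 * π * ∑ j, f j) (y := 0) (by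
      rw [ofReal_zero, zero_mul, exp_zero, mul_sum, ofReal_sum, sum_mul, exp_sum, ← hprod]
      exact prod_congr rfl fun j _ => hf j)
    have hk' : ∑ j, f j = k := mul_left_cancel₀ (a := 2 * π) (by positivity) (by linarith)
    lift k to ℕ using Int.cast_nonneg_iff.1 (hk' ▸ sum_nonneg fun j _ => Int.fract_nonneg _)
    exact ⟨k, hk'⟩
  obtain ⟨g, hgf, hg, hgsq⟩ := exists_int_sub_sum_eq_zero_sum_sq_le
    (fun j => Int.fract_nonneg _) (fun j => Int.fract_lt_one _) hm
  refine ⟨fun j => 2 * π * g j, fun j => ?_, by rw [← mul_sum, hg, mul_zero], ?_⟩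
  · obtain ⟨k, hk⟩ := hgf j
    rw [← hf j]
    simp only [hk]
    push_cast
    rw [mul_sub, mul_comm _ (k : ℂ), exp_mul_I_periodic.sub_int_mul_eq]
  calc ∑ j, (2 * π * g j) ^ 2 = 4 * π ^ 2 * ∑ j, g j ^ 2 := by
        rw [mul_sum]
        exact sum_congr rfl fun j _ => by ring
    _ ≤ 4 * π ^ 2 * (((m * (Fintype.card ι - m) : ℕ) : ℝ) / Fintype.card ι) := by gcongr
    _ ≤ deltaSU (Fintype.card ι) := by
        rw [← mul_div_assoc]
        unfold deltaSU
        gcongr 4 * π ^ 2 * ?_ / _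
        exact_mod_cast mul_sub_le_half_mul m _

lemma sum_add_sq_of_sum_eq_zero {θ : ι → ℝ} (hθ : ∑ j, θ j = 0) (c : ℝ) :
    ∑ j, (θ j + c) ^ 2 = ∑ j, θ j ^ 2 + Fintype.card ι * c ^ 2 := by
  simp only [add_sq, sum_add_distrib, ← sum_mul, ← mul_sum, hθ, sum_const, card_univ, nsmul_eq_mul]
  ring

lemma card_mul_le_sum_sq {θ : ι → ℝ} (hθ : ∑ j, θ j = 0) {α : ℝ}
    (hα : ∀ j, ∃ k : ℤ, θ j = 2 * π * k - α) :
    Fintype.card ι * (α * (2 * π - α)) ≤ ∑ j, θ j ^ 2 := by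
  have hj : ∀ j, π ^ 2 ≤ (θ j + (α - π)) ^ 2 := by
    intro j
    obtain ⟨k, hk⟩ := hα j
    have hk1 : (1 : ℝ) ≤ (2 * k - 1) ^ 2 := by
      have : (1 : ℤ) ≤ (2 * k - 1) ^ 2 := by rcases le_or_gt k 0 with h | h <;> nlinarith
      exact_mod_cast this
    calc π ^ 2 ≤ π ^ 2 * (2 * k - 1) ^ 2 := le_mul_of_one_le_right (by positivity) hk1
      _ = (θ j + (α - π)) ^ 2 := by rw [hk]; ring
  have := sum_le_sum fun j (_ : j ∈ univ) => hj j
  rw [sum_add_sq_of_sum_eq_zero hθ, sum_const, card_univ, nsmul_eq_mul] at this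
  linarith

lemma exists_angles_sum_eq_zero_sum_sq_eq [DecidableEq ι] {k : ℕ} (hk : k ≤ Fintype.card ι) {α : ℝ}
    (hα : Fintype.card ι * α = 2 * π * k) :
    ∃ θ : ι → ℝ, (∀ j, exp ((θ j : ℂ) * I) = exp ((-α : ℝ) * I)) ∧ ∑ j, θ j = 0 ∧
      ∑ j, θ j ^ 2 = Fintype.card ι * (α * (2 * π - α)) := by
  obtain ⟨S, -, hS⟩ := exists_subset_card_eq (s := univ) (by simpa using hk)
  set θ : ι → ℝ := fun j => 2 * π * (if j ∈ S then 1 else 0) - α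
  have hθ : ∑ j, θ j = 0 := by
    simp [θ, sum_sub_distrib, hS, hα]
    ring
  refine ⟨θ, fun j => ?_, hθ, ?_⟩
  · by_cases hj : j ∈ S
    · simp only [θ, hj, if_true]
      push_cast
      rw [mul_one, sub_eq_neg_add]
      exact exp_mul_I_periodic _
    · simp [θ, hj]
  · have hsq : ∀ j, (θ j + (α - π)) ^ 2 = π ^ 2 := fun j => by
      by_cases hj : j ∈ S <;> simp only [θ, hj, if_true, if_false] <;> ring
    have := sum_add_sq_of_sum_eq_zero hθ (α - π)
    simp only [hsq, sum_const, card_univ, nsmul_eq_mul] at this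
    linarith

end Angles

section SpecialUnitary

variable {n : ℕ}

open scoped ComplexOrder in
lemma frobSq_nonneg (X : Matrix (Fin n) (Fin n) ℂ) : 0 ≤ frobSq X :=
  (Complex.nonneg_iff.1 (posSemidef_self_mul_conjTranspose X).trace_nonneg).1

lemma mQ_le_frobSq {Q X : Matrix (Fin n) (Fin n) ℂ} (hX : X ∈ suSet n)
    (hXQ : NormedSpace.exp X = Q) : mQ Q ≤ frobSq X :=
  csInf_le ⟨0, by rintro _ ⟨Y, -, -, rfl⟩; exact frobSq_nonneg Y⟩ ⟨X, hX, hXQ, rfl⟩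

lemma le_mQ {Q : Matrix (Fin n) (Fin n) ℂ} {c : ℝ} (hQ : ∃ X ∈ suSet n, NormedSpace.exp X = Q)
    (h : ∀ X ∈ suSet n, NormedSpace.exp X = Q → c ≤ frobSq X) : c ≤ mQ Q := by
  obtain ⟨X, hX, hXQ⟩ := hQ
  exact le_csInf ⟨_, X, hX, hXQ, rfl⟩ fun _ ⟨Y, hY, hYQ, hr⟩ => hr ▸ h Y hY hYQ

lemma conjStarAlgAut_mem_suSet_iff (U : unitaryGroup (Fin n) ℂ) {X : Matrix (Fin n) (Fin n) ℂ} :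
    conjStarAlgAut ℂ _ U X ∈ suSet n ↔ X ∈ suSet n := by
  simp only [suSet, Set.mem_ofPred_eq, ← star_eq_conjTranspose, ← map_star, ← map_neg,
    EmbeddingLike.apply_eq_iff_eq, trace_conjStarAlgAut]

lemma frobSq_conjStarAlgAut (U : unitaryGroup (Fin n) ℂ) (X : Matrix (Fin n) (Fin n) ℂ) :
    frobSq (conjStarAlgAut ℂ _ U X) = frobSq X := by
  rw [frobSq, frobSq, ← star_eq_conjTranspose, ← star_eq_conjTranspose, ← map_star, ← map_mul,
    trace_conjStarAlgAut]

lemma diagonal_ofReal_mul_I_mem_suSet_iff (θ : Fin n → ℝ) :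
    (diagonal fun j => (θ j : ℂ) * I) ∈ suSet n ↔ ∑ j, θ j = 0 := by
  simp only [suSet, Set.mem_ofPred_eq, ← star_eq_conjTranspose, star_diagonal_ofReal_mul_I,
    true_and, trace_diagonal, ← Finset.sum_mul, mul_eq_zero, I_ne_zero, or_false]
  norm_cast

lemma frobSq_diagonal_ofReal_mul_I (θ : Fin n → ℝ) :
    frobSq (diagonal fun j => (θ j : ℂ) * I) = ∑ j, θ j ^ 2 := by
  rw [frobSq, ← star_eq_conjTranspose, star_diagonal_ofReal_mul_I, mul_neg, diagonal_mul_diagonal,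
    trace_neg, trace_diagonal]
  simp [sq]

lemma mQ_le_deltaSU {Q : Matrix (Fin n) (Fin n) ℂ} (hQ : Q ∈ SpecialUnitary n) :
    mQ Q ≤ deltaSU n := by
  obtain ⟨U, d, hd, rfl⟩ :=
    exists_eq_conjStarAlgAut_diagonal_norm_eq_one (mem_unitaryGroup_iff.2 hQ.1)
  have hprod : ∏ j, d j = 1 := by rw [← det_diagonal, ← det_conjStarAlgAut U]; exact hQ.2
  obtain ⟨θ, hθd, hθ, hθsq⟩ := exists_angles_sum_eq_zero_sum_sq_le_deltaSU hd hprod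
  have hexp : NormedSpace.exp (conjStarAlgAut ℂ _ U (diagonal fun j => (θ j : ℂ) * I)) =
      conjStarAlgAut ℂ _ U (diagonal d) := by
    rw [exp_conjStarAlgAut, exp_diagonal_ofReal_mul_I]
    simp_rw [hθd]
  calc mQ _ ≤ frobSq (conjStarAlgAut ℂ _ U (diagonal fun j => (θ j : ℂ) * I)) :=
        mQ_le_frobSq ((conjStarAlgAut_mem_suSet_iff U).2
          ((diagonal_ofReal_mul_I_mem_suSet_iff θ).2 hθ)) hexp
    _ = ∑ j, θ j ^ 2 := by rw [frobSq_conjStarAlgAut, frobSq_diagonal_ofReal_mul_I]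
    _ ≤ deltaSU n := by simpa using hθsq

lemma extremal_mem_specialUnitary :
    exp ((-extremalAngle n : ℝ) * I) • (1 : Matrix (Fin n) (Fin n) ℂ) ∈ SpecialUnitary n := by
  have hα : (n : ℂ) * extremalAngle n = 2 * π * (n / 2 : ℕ) := by
    exact_mod_cast natCast_mul_extremalAngle n
  constructor
  · rw [conjTranspose_smul, conjTranspose_one, smul_mul_smul, one_mul, Complex.star_def, mul_conj,
      normSq_eq_norm_sq, norm_exp_ofReal_mul_I]
    simp
  · rw [det_smul, det_one, mul_one, Fintype.card_fin, ← exp_nat_mul]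
    exact exp_eq_one_iff.2 ⟨-(n / 2 : ℕ), by
      rw [Int.cast_neg, Int.cast_natCast, ofReal_neg]
      linear_combination (-I) * hα⟩

lemma card_mul_le_frobSq_of_exp_eq_smul_one {X : Matrix (Fin n) (Fin n) ℂ} (hX : X ∈ suSet n)
    {α : ℝ} (hXα : NormedSpace.exp X = exp ((-α : ℝ) * I) • 1) :
    n * (α * (2 * π - α)) ≤ frobSq X := by
  obtain ⟨U, φ, rfl⟩ := exists_eq_conjStarAlgAut_diagonal_of_star_eq_neg (X := X) hX.1
  rw [conjStarAlgAut_mem_suSet_iff, diagonal_ofReal_mul_I_mem_suSet_iff] at hX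
  rw [exp_conjStarAlgAut, exp_diagonal_ofReal_mul_I, ← map_one (conjStarAlgAut ℂ _ U),
    ← map_smul, EmbeddingLike.apply_eq_iff_eq, smul_one_eq_diagonal] at hXα
  have hφ : ∀ j, ∃ k : ℤ, φ j = 2 * π * k - α := fun j => by
    obtain ⟨k, hk⟩ := exists_int_of_exp_ofReal_mul_I_eq (congrFun (diagonal_injective hXα) j)
    exact ⟨k, by linarith⟩
  rw [frobSq_conjStarAlgAut, frobSq_diagonal_ofReal_mul_I]
  simpa using card_mul_le_sum_sq hX hφ

lemma mQ_extremal :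
    mQ (exp ((-extremalAngle n : ℝ) * I) • (1 : Matrix (Fin n) (Fin n) ℂ)) = deltaSU n := by
  obtain ⟨θ, hθexp, hθ, hθsq⟩ := exists_angles_sum_eq_zero_sum_sq_eq (ι := Fin n) (k := n / 2)
    (by simpa using Nat.div_le_self n 2) (by simpa using natCast_mul_extremalAngle n)
  have hexp : NormedSpace.exp (diagonal fun j => (θ j : ℂ) * I) =
      exp ((-extremalAngle n : ℝ) * I) • (1 : Matrix (Fin n) (Fin n) ℂ) := by
    rw [exp_diagonal_ofReal_mul_I, smul_one_eq_diagonal]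
    simp_rw [hθexp]
  have hθX := (diagonal_ofReal_mul_I_mem_suSet_iff θ).2 hθ
  rw [deltaSU_eq_mul_extremalAngle]
  refine le_antisymm ?_ (le_mQ ⟨_, hθX, hexp⟩ fun X hX hXα =>
    card_mul_le_frobSq_of_exp_eq_smul_one hX hXα)
  calc mQ _ ≤ frobSq (diagonal fun j => (θ j : ℂ) * I) := mQ_le_frobSq hθX hexp
    _ = _ := by rw [frobSq_diagonal_ofReal_mul_I, hθsq, Fintype.card_fin]

end SpecialUnitary

theorem stmt_18_general (n : ℕ) :
    IsGreatest {r : ℝ | ∃ Q ∈ SpecialUnitary n, mQ Q = r}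
      (if Even n then (n : ℝ) * π ^ 2 else ((n : ℝ) - 1 / (n : ℝ)) * π ^ 2) := by
  rw [← deltaSU_eq_ite]
  exact ⟨⟨_, extremal_mem_specialUnitary, mQ_extremal⟩,
    by rintro _ ⟨Q, hQ, rfl⟩; exact mQ_le_deltaSU hQ⟩

/-- `δ_n := max { m(Q) : Q ∈ SU_n }` equals `n·π²` for `n` even and
`(n − 1/n)·π²` for `n` odd; i.e. this value is an upper bound of `m` on `SU_n`
and is attained. -/
theorem stmt_18 (n : ℕ) (hn : 2 ≤ n) :
    IsGreatest {r : ℝ | ∃ Q ∈ SpecialUnitary n, mQ Q = r}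
      (if Even n then (n : ℝ) * π ^ 2 else ((n : ℝ) - 1 / (n : ℝ)) * π ^ 2) :=
  stmt_18_general n
end
end
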